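/- arXiv:2303.04070 — 2 statements merged into one kernel-verified Lean document; each statement's English description precedes it below -/
import Mathlib

section
/- In a directed graph with a flow (nonnegative arc values satisfying flow conservation at every node except sources and sinks), if the flow is acyclic (no directed cycle has all-positive flow), then the flow can be decomposed into at most |E| + 2|V| path flows, i.e., there exist finitely many directed paths from source-type nodes (positive net outflow) to sink-type nodes (positive net inflow) with nonnegative intensities whose superposition equals the arc flow. -/
/-! Helper lemmas -/

lemma exists_max_chain {α : Type*} {s : α → α → Prop}
    (hwf : WellFounded (fun a b => s b a)) (y : α) :
    ∃ p : List α, List.Chain s y p ∧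
      ∀ z, ¬ s ((y :: p).getLast (List.cons_ne_nil _ _)) z := by
  induction y using WellFounded.induction hwf with
  | _ y IH =>
    by_cases h : ∃ z, s y z
    · obtain ⟨z, hz⟩ := h
      obtain ⟨p, hc, hl⟩ := IH z hz
      refine ⟨z :: p, List.Chain.cons hz hc, ?_⟩
      rwa [List.getLast_cons (List.cons_ne_nil _ _)]
    · push_neg at h
      exact ⟨[], List.Chain.nil, by simpa using h⟩

lemma chain_transGen {α : Type*} {r : α → α → Prop} :
    ∀ {l : List α} {a b : α}, List.Chain r a l → b ∈ l → Relation.TransGen r a b := by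
  intro l
  induction l with
  | nil => intro a b _ hb; simp at hb
  | cons c l IH =>
    intro a b hc hb
    rw [List.Chain, List.isChain_cons_cons] at hc
    rcases List.mem_cons.mp hb with rfl | hb
    · exact Relation.TransGen.single hc.1
    · exact Relation.TransGen.head hc.1 (IH hc.2 hb)

lemma chain'_nodup {α : Type*} {r : α → α → Prop}
    (hirr : ∀ a, ¬ Relation.TransGen r a a) :
    ∀ {l : List α}, List.Chain' r l → l.Nodup := by
  intro l
  induction l with
  | nil => intro _; simp
  | cons a l IH =>
    intro hc
    have hc' : List.Chain r a l := hc
    exact List.nodup_cons.mpr ⟨fun ha => hirr a (chain_transGen hc' ha), IH hc.tail⟩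

lemma chain'_zip {α : Type*} {r : α → α → Prop} :
    ∀ {l : List α}, List.Chain' r l → ∀ a ∈ l.zip l.tail, r a.1 a.2 := by
  intro l
  induction l with
  | nil => intro _ a ha; simp at ha
  | cons x l IH =>
    intro hc a ha
    cases l with
    | nil => simp at ha
    | cons y l' =>
      rw [List.Chain', List.isChain_cons_cons] at hc
      simp only [List.tail_cons, List.zip_cons_cons, List.mem_cons] at ha
      rcases ha with rfl | ha
      · exact hc.1
      · exact IH hc.2 a ha

lemma exists_path {V : Type*} [Finite V] (r : V → V → Prop)
    (hacyc : ¬ ∃ i, Relation.TransGen r i i) {x₀ y₀ : V} (h0 : r x₀ y₀) :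
    ∃ (P : List V) (s t : V), P ≠ [] ∧ P.head? = some s ∧ P.getLast? = some t ∧ s ≠ t ∧
      P.Nodup ∧ List.Chain' r P ∧ (∀ z, ¬ r z s) ∧ (∀ z, ¬ r t z) := by
  have hirr : ∀ a, ¬ Relation.TransGen r a a := fun a ha => hacyc ⟨a, ha⟩
  haveI : IsTrans V (Relation.TransGen r) := ⟨fun _ _ _ => Relation.TransGen.trans⟩
  haveI : IsIrrefl V (Relation.TransGen r) := ⟨hirr⟩
  have wfT : WellFounded (Relation.TransGen r) :=
    Finite.wellFounded_of_trans_of_irrefl _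
  haveI : IsTrans V (fun a b => Relation.TransGen r b a) :=
    ⟨fun _ _ _ hab hbc => Relation.TransGen.trans hbc hab⟩
  haveI : IsIrrefl V (fun a b => Relation.TransGen r b a) := ⟨hirr⟩
  have wfT' : WellFounded (fun a b => Relation.TransGen r b a) :=
    Finite.wellFounded_of_trans_of_irrefl _
  have wf_fwd : WellFounded (fun a b => r b a) :=
    Subrelation.wf (fun h => Relation.TransGen.single h) wfT'
  have wf_bwd : WellFounded (fun a b => r a b) :=
    Subrelation.wf (fun h => Relation.TransGen.single h) wfT
  obtain ⟨p₁, hc₁, hl₁⟩ := exists_max_chain (s := r) wf_fwd y₀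
  obtain ⟨p₂, hc₂, hl₂⟩ := exists_max_chain (s := fun a b => r b a) wf_bwd x₀
  set s : V := (x₀ :: p₂).getLast (List.cons_ne_nil _ _) with hs
  set t : V := (y₀ :: p₁).getLast (List.cons_ne_nil _ _) with ht
  have hchain : List.Chain' r ((x₀ :: p₂).reverse ++ (y₀ :: p₁)) := by
    rw [List.Chain', List.isChain_append]
    refine ⟨List.isChain_reverse.mpr hc₂, hc₁, ?_⟩
    intro x hx y hy
    rw [List.getLast?_reverse] at hx
    simp only [List.head?_cons, Option.mem_def, Option.some.injEq] at hx hy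
    subst hx; subst hy
    exact h0
  have hnodup : ((x₀ :: p₂).reverse ++ (y₀ :: p₁)).Nodup := chain'_nodup hirr hchain
  have hst : s ≠ t := by
    intro h
    have hsmem : s ∈ (x₀ :: p₂).reverse := List.mem_reverse.mpr (List.getLast_mem _)
    have htmem : t ∈ y₀ :: p₁ := List.getLast_mem _
    exact (List.disjoint_of_nodup_append hnodup) hsmem (h ▸ htmem)
  refine ⟨(x₀ :: p₂).reverse ++ (y₀ :: p₁), s, t, by simp, ?_, ?_, hst, hnodup, hchain, hl₂, hl₁⟩
  · rw [List.head?_append, List.head?_reverse, List.getLast?_eq_getLast (List.cons_ne_nil _ _)]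
    rfl
  · rw [List.getLast?_append, List.getLast?_eq_getLast (List.cons_ne_nil _ _)]
    rfl

lemma out_card {V : Type*} [Fintype V] [DecidableEq V] :
    ∀ (P : List V), P.Nodup → ∀ i : V,
      (Finset.univ.filter (fun j => (i, j) ∈ P.zip P.tail)).card
        = if i ∈ P.dropLast then 1 else 0 := by
  intro P
  induction P with
  | nil => intro _ i; simp
  | cons a rest IH =>
    intro hnd i
    cases rest with
    | nil => simp
    | cons b l =>
      have hna : a ∉ b :: l := (List.nodup_cons.mp hnd).1
      have hnd' : (b :: l).Nodup := (List.nodup_cons.mp hnd).2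
      simp only [List.tail_cons, List.zip_cons_cons]
      by_cases hia : i = a
      · subst hia
        have : (Finset.univ.filter
            (fun j => (i, j) ∈ (i, b) :: (b :: l).zip l)) = {b} := by
          ext j
          simp only [Finset.mem_filter, Finset.mem_univ, true_and, List.mem_cons,
            Finset.mem_singleton, Prod.mk.injEq, true_and]
          constructor
          · rintro (rfl | h)
            · rfl
            · exact absurd ((List.of_mem_zip h).1) hna
          · rintro rfl; exact Or.inl rfl
        erw [this]
        simp [List.dropLast_cons₂]
      · have : (Finset.univ.filter (fun j => (i, j) ∈ (a, b) :: (b :: l).zip l))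
            = Finset.univ.filter (fun j => (i, j) ∈ (b :: l).zip ((b :: l).tail)) := by
          apply Finset.filter_congr
          intro j _
          simp only [List.mem_cons, Prod.mk.injEq, List.tail_cons, eq_iff_iff]
          constructor
          · rintro (⟨rfl, rfl⟩ | h)
            · exact absurd rfl hia
            · exact h
          · exact fun h => Or.inr h
        erw [this]; rw [IH hnd' i, List.dropLast_cons₂]
        simp [hia]

lemma in_card {V : Type*} [Fintype V] [DecidableEq V] :
    ∀ (P : List V), P.Nodup → ∀ i : V,
      (Finset.univ.filter (fun j => (j, i) ∈ P.zip P.tail)).card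
        = if i ∈ P.tail then 1 else 0 := by
  intro P
  induction P with
  | nil => intro _ i; simp
  | cons a rest IH =>
    intro hnd i
    cases rest with
    | nil => simp
    | cons b l =>
      have hnd' : (b :: l).Nodup := (List.nodup_cons.mp hnd).2
      have hnb : b ∉ l := (List.nodup_cons.mp hnd').1
      simp only [List.tail_cons, List.zip_cons_cons]
      by_cases hib : i = b
      · subst hib
        have : (Finset.univ.filter
            (fun j => (j, i) ∈ (a, i) :: (i :: l).zip l)) = {a} := by
          ext j
          simp only [Finset.mem_filter, Finset.mem_univ, true_and, List.mem_cons,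
            Finset.mem_singleton, Prod.mk.injEq, and_true]
          constructor
          · rintro (rfl | h)
            · rfl
            · exact absurd ((List.of_mem_zip h).2) hnb
          · rintro rfl; exact Or.inl rfl
        erw [this]
        simp
      · have : (Finset.univ.filter (fun j => (j, i) ∈ (a, b) :: (b :: l).zip l))
            = Finset.univ.filter (fun j => (j, i) ∈ (b :: l).zip ((b :: l).tail)) := by
          apply Finset.filter_congr
          intro j _
          simp only [List.mem_cons, Prod.mk.injEq, List.tail_cons, eq_iff_iff]
          constructor
          · rintro (⟨rfl, rfl⟩ | h)
            · exact absurd rfl hib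
            · exact h
          · exact fun h => Or.inr h
        erw [this]; rw [IH hnd' i]
        simp [hib]
        split_ifs <;> simp_all

lemma sum_ite_card {V : Type*} [Fintype V] [DecidableEq V] {A : Finset (V × V)}
    {E : List (V × V)} (hEA : ∀ a ∈ E, a ∈ A) (f : ℝ) (g : V → V × V) :
    ∑ j ∈ Finset.univ.filter (fun j => g j ∈ A), (if g j ∈ E then f else 0)
      = f * (Finset.univ.filter (fun j => g j ∈ E)).card := by
  have hset : (Finset.univ.filter (fun j => g j ∈ A)).filter (fun j => g j ∈ E)
      = Finset.univ.filter (fun j => g j ∈ E) := by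
    ext j
    simp only [Finset.mem_filter, Finset.mem_univ, true_and]
    exact ⟨fun h => h.2, fun h => ⟨hEA _ h, h⟩⟩
  rw [← Finset.sum_filter, hset, Finset.sum_const, nsmul_eq_mul, mul_comm]

/-- Influx of a node: outflow minus inflow. -/
noncomputable def influx0 {V : Type*} [Fintype V] [DecidableEq V]
    (A : Finset (V × V)) (v : V × V → ℝ) (i : V) : ℝ :=
  ∑ j ∈ Finset.univ.filter (fun j => (i, j) ∈ A), v (i, j)
    - ∑ j ∈ Finset.univ.filter (fun j => (j, i) ∈ A), v (j, i)

lemma decomp_aux {V : Type*} [Fintype V] [DecidableEq V] (A : Finset (V × V)) (S T : Set V) :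
    ∀ (n : ℕ) (v : V × V → ℝ),
      (A.filter fun a => v a ≠ 0).card
        + (Finset.univ.filter fun i => influx0 A v i ≠ 0).card ≤ n →
      (∀ a ∈ A, 0 ≤ v a) →
      (∀ a ∉ A, v a = 0) →
      (¬ ∃ i, Relation.TransGen (fun x y => (x, y) ∈ A ∧ 0 < v (x, y)) i i) →
      (∀ i, 0 < influx0 A v i → i ∈ S) →
      (∀ i, influx0 A v i < 0 → i ∈ T) →
      ∃ L : List (List V × ℝ),
        L.length ≤ (A.filter fun a => v a ≠ 0).card
          + (Finset.univ.filter fun i => influx0 A v i ≠ 0).card ∧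
        (∀ pf ∈ L,
          pf.1 ≠ [] ∧ 0 < pf.2 ∧ List.Chain' (fun i j => (i, j) ∈ A) pf.1 ∧
          (∃ s, pf.1.head? = some s ∧ s ∈ S) ∧
          (∃ t, pf.1.getLast? = some t ∧ t ∈ T)) ∧
        (∀ a ∈ A, v a = (L.map (fun pf => if a ∈ pf.1.zip pf.1.tail then pf.2 else 0)).sum) := by
  intro n
  induction n with
  | zero =>
    intro v hμ hnn _ _ _ _
    refine ⟨[], by simp, by simp, ?_⟩
    intro a ha
    simp only [List.map_nil, List.sum_nil]
    by_contra hne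
    have hmem : a ∈ A.filter (fun a => v a ≠ 0) := Finset.mem_filter.mpr ⟨ha, hne⟩
    have h1 : 0 < (A.filter fun a => v a ≠ 0).card := Finset.card_pos.mpr ⟨a, hmem⟩
    omega
  | succ n IH =>
    intro v hμ hnn hsupp hacyc hS hT
    by_cases hpos : ∃ a ∈ A, 0 < v a
    · obtain ⟨⟨x₀, y₀⟩, ha₀A, ha₀v⟩ := hpos
      set r : V → V → Prop := fun x y => (x, y) ∈ A ∧ 0 < v (x, y) with hr
      have h0 : r x₀ y₀ := ⟨ha₀A, ha₀v⟩
      obtain ⟨P, s, t, hPne, hPhead, hPlast, hst, hPnd, hPchain, hins, houtt⟩ :=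
        exists_path r hacyc h0
      set E : List (V × V) := P.zip P.tail with hE
      have hEmem : ∀ a ∈ E, a ∈ A ∧ 0 < v a := fun a ha => chain'_zip hPchain a ha
      have hEA : ∀ a ∈ E, a ∈ A := fun a ha => (hEmem a ha).1
      have hsP : s ∈ P := by
        cases P with
        | nil => exact absurd rfl hPne
        | cons x l => simp only [List.head?_cons, Option.some.injEq] at hPhead; subst hPhead; simp
      have htP : t ∈ P := by
        have := List.getLast?_eq_getLast hPne
        rw [this] at hPlast
        have : P.getLast hPne = t := by injection hPlast
        exact this ▸ List.getLast_mem hPne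
      have ht_eq : P.getLast hPne = t := by
        have := List.getLast?_eq_getLast hPne
        rw [this] at hPlast
        injection hPlast
      have hPtail : P = s :: P.tail := by
        cases P with
        | nil => exact absurd rfl hPne
        | cons x l => simp only [List.head?_cons, Option.some.injEq] at hPhead; rw [hPhead]; rfl
      have hs_tail : s ∉ P.tail := by
        intro h
        have := hPnd
        rw [hPtail] at this
        exact (List.nodup_cons.mp this).1 h
      have ht_drop : t ∉ P.dropLast := by
        intro h
        have hsplit := List.dropLast_append_getLast hPne
        rw [ht_eq] at hsplit
        have := hPnd
        rw [← hsplit] at this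
        exact (List.disjoint_of_nodup_append this) h (by simp)
      have hmem_dropLast : ∀ i : V, i ∈ P.dropLast ↔ (i ∈ P ∧ i ≠ t) := by
        intro i
        have hsplit := List.dropLast_append_getLast hPne
        rw [ht_eq] at hsplit
        constructor
        · intro h
          exact ⟨(P.dropLast_sublist).subset h, fun hit => ht_drop (hit ▸ h)⟩
        · rintro ⟨hiP, hit⟩
          rw [← hsplit] at hiP
          rcases List.mem_append.mp hiP with h | h
          · exact h
          · simp at h; exact absurd h hit
      have hmem_tail : ∀ i : V, i ∈ P.tail ↔ (i ∈ P ∧ i ≠ s) := by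
        intro i
        constructor
        · intro h
          refine ⟨by rw [hPtail]; exact List.mem_cons_of_mem _ h, fun his => hs_tail (his ▸ h)⟩
        · rintro ⟨hiP, his⟩
          rw [hPtail] at hiP
          rcases List.mem_cons.mp hiP with h | h
          · exact absurd h his
          · exact h
      -- existence of first and last arcs
      have hsout : ∃ j, (s, j) ∈ E := by
        have h1 : s ∈ P.dropLast := (hmem_dropLast s).mpr ⟨hsP, hst⟩
        have h2 := out_card P hPnd s
        rw [if_pos h1] at h2
        have h3 : 0 < (Finset.univ.filter (fun j => (s, j) ∈ E)).card := by rw [hE] at *; omega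
        obtain ⟨j, hj⟩ := Finset.card_pos.mp h3
        exact ⟨j, (Finset.mem_filter.mp hj).2⟩
      have htin : ∃ j, (j, t) ∈ E := by
        have h1 : t ∈ P.tail := (hmem_tail t).mpr ⟨htP, hst.symm⟩
        have h2 := in_card P hPnd t
        rw [if_pos h1] at h2
        have h3 : 0 < (Finset.univ.filter (fun j => (j, t) ∈ E)).card := by rw [hE] at *; omega
        obtain ⟨j, hj⟩ := Finset.card_pos.mp h3
        exact ⟨j, (Finset.mem_filter.mp hj).2⟩
      -- influx signs
      have hsinflux : 0 < influx0 A v s := by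
        obtain ⟨j₀, hj₀⟩ := hsout
        have hrs := hEmem _ hj₀
        rw [influx0]
        have hin0 : ∑ j ∈ Finset.univ.filter (fun j => (j, s) ∈ A), v (j, s) = 0 := by
          apply Finset.sum_eq_zero
          intro j hj
          have hjA : (j, s) ∈ A := (Finset.mem_filter.mp hj).2
          have : ¬ (0 < v (j, s)) := fun hp => hins j ⟨hjA, hp⟩
          linarith [hnn _ hjA]
        have hout : v (s, j₀) ≤ ∑ j ∈ Finset.univ.filter (fun j => (s, j) ∈ A), v (s, j) :=
          Finset.single_le_sum (fun j hj => hnn _ (Finset.mem_filter.mp hj).2)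
            (Finset.mem_filter.mpr ⟨Finset.mem_univ _, hrs.1⟩)
        linarith [hrs.2]
      have htinflux : influx0 A v t < 0 := by
        obtain ⟨j₀, hj₀⟩ := htin
        have hrt := hEmem _ hj₀
        rw [influx0]
        have hout0 : ∑ j ∈ Finset.univ.filter (fun j => (t, j) ∈ A), v (t, j) = 0 := by
          apply Finset.sum_eq_zero
          intro j hj
          have hjA : (t, j) ∈ A := (Finset.mem_filter.mp hj).2
          have : ¬ (0 < v (t, j)) := fun hp => houtt j ⟨hjA, hp⟩
          linarith [hnn _ hjA]
        have hin : v (j₀, t) ≤ ∑ j ∈ Finset.univ.filter (fun j => (j, t) ∈ A), v (j, t) :=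
          Finset.single_le_sum (f := fun j => v (j, t))
            (fun j hj => hnn _ (Finset.mem_filter.mp hj).2)
            (Finset.mem_filter.mpr ⟨Finset.mem_univ _, hrt.1⟩)
        linarith [hrt.2]
      -- define f
      set Fs : Finset ℝ :=
        insert (influx0 A v s) (insert (-influx0 A v t) (E.toFinset.image v)) with hFs
      have hFne : Fs.Nonempty := ⟨_, Finset.mem_insert_self _ _⟩
      set f : ℝ := Fs.min' hFne with hf
      have hfmem : f ∈ Fs := Finset.min'_mem _ _
      have hf_s : f ≤ influx0 A v s := Finset.min'_le _ _ (Finset.mem_insert_self _ _)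
      have hf_t : f ≤ -influx0 A v t :=
        Finset.min'_le _ _ (Finset.mem_insert_of_mem (Finset.mem_insert_self _ _))
      have hf_le : ∀ a ∈ E, f ≤ v a := fun a ha =>
        Finset.min'_le _ _ (Finset.mem_insert_of_mem (Finset.mem_insert_of_mem
          (Finset.mem_image_of_mem v (List.mem_toFinset.mpr ha))))
      have hfpos : 0 < f := by
        rcases Finset.mem_insert.mp hfmem with h | h
        · rw [h]; exact hsinflux
        · rcases Finset.mem_insert.mp h with h | h
          · rw [h]; linarith
          · obtain ⟨a, haE, hva⟩ := Finset.mem_image.mp h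
            rw [← hva]; exact (hEmem a (List.mem_toFinset.mp haE)).2
      -- residual flow
      set w : V × V → ℝ := fun a => v a - if a ∈ E then f else 0 with hw
      have hwle : ∀ a, w a ≤ v a := by
        intro a
        rw [hw]
        by_cases h : a ∈ E <;> simp [h] <;> linarith
      have hwnn : ∀ a ∈ A, 0 ≤ w a := by
        intro a ha
        rw [hw]
        by_cases h : a ∈ E
        · simp only [h, if_true]; linarith [hf_le a h]
        · simp only [h, if_false]; simpa using hnn a ha
      have hwsupp : ∀ a ∉ A, w a = 0 := by
        intro a ha
        have haE : a ∉ E := fun h => ha (hEA a h)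
        rw [hw]
        simp [haE, hsupp a ha]
      have hwacyc : ¬ ∃ i, Relation.TransGen (fun x y => (x, y) ∈ A ∧ 0 < w (x, y)) i i := by
        rintro ⟨i, hi⟩
        exact hacyc ⟨i, Relation.TransGen.mono (r := fun x y => (x, y) ∈ A ∧ 0 < w (x, y)) (p := fun x y => (x, y) ∈ A ∧ 0 < v (x, y)) (fun x y hxy => ⟨hxy.1, lt_of_lt_of_le hxy.2 (hwle (x, y))⟩) i i hi⟩
      -- key influx identity
      have hkey : ∀ i, influx0 A w i
          = influx0 A v i - f * ((if i = s then 1 else 0) - (if i = t then 1 else 0)) := by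
        intro i
        have hdeg : ((Finset.univ.filter (fun j => (i, j) ∈ E)).card : ℝ)
            - ((Finset.univ.filter (fun j => (j, i) ∈ E)).card : ℝ)
            = (if i = s then 1 else 0) - (if i = t then 1 else 0) := by
          rw [hE, out_card P hPnd i, in_card P hPnd i]
          by_cases his : i = s
          · subst his
            rw [if_pos ((hmem_dropLast i).mpr ⟨hsP, hst⟩),
                if_neg (fun h => ((hmem_tail i).mp h).2 rfl),
                if_pos rfl, if_neg hst]
            norm_num
          · by_cases hit : i = t
            · subst hit
              rw [if_neg (fun h => ((hmem_dropLast i).mp h).2 rfl),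
                  if_pos ((hmem_tail i).mpr ⟨htP, hst.symm⟩),
                  if_neg his, if_pos rfl]
              norm_num
            · by_cases hiP : i ∈ P
              · rw [if_pos ((hmem_dropLast i).mpr ⟨hiP, hit⟩),
                    if_pos ((hmem_tail i).mpr ⟨hiP, his⟩), if_neg his, if_neg hit]
                norm_num
              · rw [if_neg (fun h => hiP ((hmem_dropLast i).mp h).1),
                    if_neg (fun h => hiP ((hmem_tail i).mp h).1), if_neg his, if_neg hit]
                norm_num
        rw [influx0, influx0]
        have hsub1 : ∀ j, w (i, j) = v (i, j) - (if (i, j) ∈ E then f else 0) := fun j => by rw [hw]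
        have hsub2 : ∀ j, w (j, i) = v (j, i) - (if (j, i) ∈ E then f else 0) := fun j => by rw [hw]
        simp only [hsub1, hsub2]
        rw [Finset.sum_sub_distrib, Finset.sum_sub_distrib,
          sum_ite_card hEA f (fun j => (i, j)), sum_ite_card hEA f (fun j => (j, i))]
        linear_combination (-f) * hdeg
      -- subsets for measure
      have hsub1 : A.filter (fun a => w a ≠ 0) ⊆ A.filter (fun a => v a ≠ 0) := by
        intro a ha
        obtain ⟨haA, hwa⟩ := Finset.mem_filter.mp ha
        refine Finset.mem_filter.mpr ⟨haA, ?_⟩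
        intro hva
        apply hwa
        have haE : a ∉ E := fun h => by linarith [(hEmem a h).2, le_of_eq hva.symm]
        rw [hw]; simp [haE, hva]
      have hsub2 : (Finset.univ.filter fun i => influx0 A w i ≠ 0)
          ⊆ (Finset.univ.filter fun i => influx0 A v i ≠ 0) := by
        intro i hi
        obtain ⟨_, hwi⟩ := Finset.mem_filter.mp hi
        refine Finset.mem_filter.mpr ⟨Finset.mem_univ _, ?_⟩
        by_cases his : i = s
        · subst his; exact ne_of_gt hsinflux
        · by_cases hit : i = t
          · subst hit; exact ne_of_lt htinflux
          · intro hvi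
            apply hwi
            rw [hkey i, hvi, if_neg his, if_neg hit]
            ring
      -- strict decrease
      have hlt : (A.filter fun a => w a ≠ 0).card
            + (Finset.univ.filter fun i => influx0 A w i ≠ 0).card
          < (A.filter fun a => v a ≠ 0).card
            + (Finset.univ.filter fun i => influx0 A v i ≠ 0).card := by
        rcases Finset.mem_insert.mp hfmem with hcase | hcase
        · -- f = influx s : s drops out of the influx filter
          have hsv : s ∈ (Finset.univ.filter fun i => influx0 A v i ≠ 0) :=
            Finset.mem_filter.mpr ⟨Finset.mem_univ _, ne_of_gt hsinflux⟩
          have hsw : s ∉ (Finset.univ.filter fun i => influx0 A w i ≠ 0) := by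
            intro h
            have := (Finset.mem_filter.mp h).2
            apply this
            rw [hkey s, if_pos rfl, if_neg hst, ← hcase]
            ring
          have h2 : (Finset.univ.filter fun i => influx0 A w i ≠ 0).card
              < (Finset.univ.filter fun i => influx0 A v i ≠ 0).card :=
            Finset.card_lt_card ((Finset.ssubset_iff_of_subset hsub2).mpr ⟨s, hsv, hsw⟩)
          have h1 := Finset.card_le_card hsub1
          omega
        · rcases Finset.mem_insert.mp hcase with hcase | hcase
          · have htv : t ∈ (Finset.univ.filter fun i => influx0 A v i ≠ 0) :=
              Finset.mem_filter.mpr ⟨Finset.mem_univ _, ne_of_lt htinflux⟩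
            have htw : t ∉ (Finset.univ.filter fun i => influx0 A w i ≠ 0) := by
              intro h
              have := (Finset.mem_filter.mp h).2
              apply this
              rw [hkey t, if_neg (Ne.symm hst), if_pos rfl]
              have : f = -influx0 A v t := hcase
              rw [this]; ring
            have h2 : (Finset.univ.filter fun i => influx0 A w i ≠ 0).card
                < (Finset.univ.filter fun i => influx0 A v i ≠ 0).card :=
              Finset.card_lt_card ((Finset.ssubset_iff_of_subset hsub2).mpr ⟨t, htv, htw⟩)
            have h1 := Finset.card_le_card hsub1
            omega
          · obtain ⟨a, haE', hva⟩ := Finset.mem_image.mp hcase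
            have haE : a ∈ E := List.mem_toFinset.mp haE'
            have haA : a ∈ A := hEA a haE
            have hav : a ∈ A.filter (fun a => v a ≠ 0) :=
              Finset.mem_filter.mpr ⟨haA, ne_of_gt (hEmem a haE).2⟩
            have haw : a ∉ A.filter (fun a => w a ≠ 0) := by
              intro h
              have := (Finset.mem_filter.mp h).2
              apply this
              rw [hw]
              simp only [haE, if_true]
              rw [← hva]
              ring
            have h1 : (A.filter fun a => w a ≠ 0).card < (A.filter fun a => v a ≠ 0).card :=
              Finset.card_lt_card ((Finset.ssubset_iff_of_subset hsub1).mpr ⟨a, hav, haw⟩)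
            have h2 := Finset.card_le_card hsub2
            omega
      -- hypotheses for recursion
      have hS' : ∀ i, 0 < influx0 A w i → i ∈ S := by
        intro i hi
        by_cases his : i = s
        · subst his; exact hS _ hsinflux
        · by_cases hit : i = t
          · subst hit
            exfalso
            rw [hkey i, if_neg his, if_pos rfl] at hi
            have : influx0 A v i + f ≤ 0 := by linarith
            linarith
          · apply hS i
            rw [hkey i, if_neg his, if_neg hit] at hi
            linarith
      have hT' : ∀ i, influx0 A w i < 0 → i ∈ T := by
        intro i hi
        by_cases hit : i = t
        · subst hit; exact hT _ htinflux
        · by_cases his : i = s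
          · subst his
            exfalso
            rw [hkey i, if_pos rfl, if_neg hst] at hi
            linarith
          · apply hT i
            rw [hkey i, if_neg his, if_neg hit] at hi
            linarith
      have hμw : (A.filter fun a => w a ≠ 0).card
          + (Finset.univ.filter fun i => influx0 A w i ≠ 0).card ≤ n := by omega
      obtain ⟨L', hlen', hprop', hsum'⟩ := IH w hμw hwnn hwsupp hwacyc hS' hT'
      refine ⟨(P, f) :: L', ?_, ?_, ?_⟩
      · simp only [List.length_cons]
        omega
      · intro pf hpf
        rcases List.mem_cons.mp hpf with rfl | hpf
        · exact ⟨hPne, hfpos,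
            hPchain.imp (fun {x y} hxy => hxy.1),
            ⟨s, hPhead, hS _ hsinflux⟩, ⟨t, hPlast, hT _ htinflux⟩⟩
        · exact hprop' pf hpf
      · intro a ha
        simp only [List.map_cons, List.sum_cons]
        rw [← hsum' a ha, hw]
        simp only [← hE]
        ring
    · push_neg at hpos
      refine ⟨[], by simp, by simp, ?_⟩
      intro a ha
      simp only [List.map_nil, List.sum_nil]
      exact le_antisymm (hpos a ha) (hnn a ha)

/-- Flow decomposition: an acyclic nonnegative arc flow satisfying conservation at all
balanced nodes decomposes into at most |A| + 2|V| path flows, i.e. a finite list of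
pairs (P, f) where P is a directed path from a node of positive influx to a node of
negative influx and f > 0, whose superposition recovers the arc flow. -/
theorem stmt_0 {V : Type*} [Fintype V] [DecidableEq V]
    (A : Finset (V × V)) (v : V × V → ℝ)
    (hnn : ∀ a ∈ A, 0 ≤ v a)
    (hsupp : ∀ a ∉ A, v a = 0)
    (hacyclic : ¬ ∃ i : V, Relation.TransGen (fun x y => (x, y) ∈ A ∧ 0 < v (x, y)) i i) :
    ∃ L : List (List V × ℝ),
      L.length ≤ A.card + 2 * Fintype.card V ∧
      (∀ pf ∈ L,
        pf.1 ≠ [] ∧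
        0 < pf.2 ∧
        List.Chain' (fun i j => (i, j) ∈ A) pf.1 ∧
        (∃ s, pf.1.head? = some s ∧ 0 < influx0 A v s) ∧
        (∃ t, pf.1.getLast? = some t ∧ influx0 A v t < 0)) ∧
      (∀ a : V × V, a ∈ A →
        v a = (L.map (fun pf => if a ∈ pf.1.zip pf.1.tail then pf.2 else 0)).sum) := by
  obtain ⟨L, hlen, hprop, hsum⟩ :=
    decomp_aux A {i | 0 < influx0 A v i} {i | influx0 A v i < 0}
      ((A.filter fun a => v a ≠ 0).card
        + (Finset.univ.filter fun i => influx0 A v i ≠ 0).card)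
      v le_rfl hnn hsupp hacyclic (fun i hi => hi) (fun i hi => hi)
  refine ⟨L, ?_, hprop, hsum⟩
  have h1 : (A.filter fun a => v a ≠ 0).card ≤ A.card := Finset.card_filter_le _ _
  have h2 : (Finset.univ.filter fun i => influx0 A v i ≠ 0).card ≤ Fintype.card V := by
    simpa using Finset.card_filter_le (Finset.univ : Finset V) _
  omega
end

section
/- Each 'push' operation of the flow decomposition algorithm (which subtracts the minimum of the source surplus, sink deficit, and minimum arc flow on a found path from all arcs of that path and updates node influxes) either reduces the number of arcs with strictly positive flow by at least one or reduces the number of imbalanced nodes by at least one; consequently the algorithm terminates after at most |A| + 2|V| pushes. -/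
/-- Influx of a node: outflow minus inflow. -/
noncomputable def influx1 {V : Type*} [Fintype V] [DecidableEq V]
    (A : Finset (V × V)) (v : V × V → ℝ) (i : V) : ℝ :=
  ∑ j ∈ Finset.univ.filter (fun j => (i, j) ∈ A), v (i, j)
    - ∑ j ∈ Finset.univ.filter (fun j => (j, i) ∈ A), v (j, i)

/-- One push operation of the flow decomposition algorithm: along a simple directed path
`L` (a nodup vertex list) from a node `s` with positive influx to a node `t` with
negative influx, all of whose arcs carry positive flow, we subtract
δ = min{Influx(s), −Influx(t), min arc flow on the path} from every arc of the path. -/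
def IsPush {V : Type*} [Fintype V] [DecidableEq V]
    (A : Finset (V × V)) (v v' : V × V → ℝ) : Prop :=
  ∃ (L : List V) (s t : V) (δ : ℝ),
    2 ≤ L.length ∧ L.Nodup ∧
    L.head? = some s ∧ L.getLast? = some t ∧
    List.Chain' (fun i j => (i, j) ∈ A ∧ 0 < v (i, j)) L ∧
    0 < influx1 A v s ∧ influx1 A v t < 0 ∧
    0 < δ ∧
    δ ≤ influx1 A v s ∧ δ ≤ -influx1 A v t ∧
    (∀ a ∈ L.zip L.tail, δ ≤ v a) ∧
    (δ = influx1 A v s ∨ δ = -influx1 A v t ∨ ∃ a ∈ L.zip L.tail, δ = v a) ∧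
    v' = fun a => if a ∈ L.zip L.tail then v a - δ else v a

open Finset

lemma chain'_zip_tail {α : Type*} {R : α → α → Prop} :
    ∀ {L : List α}, L.Chain' R → ∀ a ∈ L.zip L.tail, R a.1 a.2
  | [], _, a, ha => by simp at ha
  | [x], _, a, ha => by simp at ha
  | x :: y :: l, h, a, ha => by
    simp only [List.Chain', List.isChain_cons_cons] at h
    rw [List.tail_cons, List.zip_cons_cons, List.mem_cons] at ha
    rcases ha with rfl | ha
    · exact h.1
    · exact chain'_zip_tail h.2 a ha

lemma map_fst_zip_tail {α : Type*} :
    ∀ (L : List α), (L.zip L.tail).map Prod.fst = L.dropLast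
  | [] => rfl
  | [a] => rfl
  | a :: b :: l => by
    have := map_fst_zip_tail (b :: l)
    simp only [List.tail_cons, List.zip_cons_cons, List.map_cons] at *
    rw [this]
    simp

lemma map_snd_zip_tail {α : Type*} (L : List α) :
    (L.zip L.tail).map Prod.snd = L.tail := by
  apply List.map_snd_zip
  cases L <;> simp

lemma card_filter_fst {V : Type*} [Fintype V] [DecidableEq V] (P : List (V × V))
    (h : (P.map Prod.fst).Nodup) (i : V) :
    (univ.filter fun j => (i, j) ∈ P).card = if i ∈ P.map Prod.fst then 1 else 0 := by
  split_ifs with hi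
  · obtain ⟨p, hp, hfst⟩ := List.mem_map.mp hi
    rw [Finset.card_eq_one]
    refine ⟨p.2, ?_⟩
    ext j
    simp only [mem_filter, mem_univ, true_and, mem_singleton]
    constructor
    · intro hj
      have h2 : (i, j) = p := List.inj_on_of_nodup_map h hj hp (by simp [hfst])
      exact congrArg Prod.snd h2
    · rintro rfl
      rw [← hfst]
      simpa using hp
  · rw [Finset.card_eq_zero]
    ext j
    simp only [mem_filter, mem_univ, true_and, Finset.notMem_empty, iff_false]
    intro hj
    exact hi (List.mem_map.mpr ⟨(i, j), hj, rfl⟩)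

lemma card_filter_snd {V : Type*} [Fintype V] [DecidableEq V] (P : List (V × V))
    (h : (P.map Prod.snd).Nodup) (i : V) :
    (univ.filter fun j => (j, i) ∈ P).card = if i ∈ P.map Prod.snd then 1 else 0 := by
  split_ifs with hi
  · obtain ⟨p, hp, hsnd⟩ := List.mem_map.mp hi
    rw [Finset.card_eq_one]
    refine ⟨p.1, ?_⟩
    ext j
    simp only [mem_filter, mem_univ, true_and, mem_singleton]
    constructor
    · intro hj
      have h2 : (j, i) = p := List.inj_on_of_nodup_map h hj hp (by simp [hsnd])
      exact congrArg Prod.fst h2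
    · rintro rfl
      rw [← hsnd]
      simpa using hp
  · rw [Finset.card_eq_zero]
    ext j
    simp only [mem_filter, mem_univ, true_and, Finset.notMem_empty, iff_false]
    intro hj
    exact hi (List.mem_map.mpr ⟨(j, i), hj, rfl⟩)

lemma influx_push {V : Type*} [Fintype V] [DecidableEq V]
    (A : Finset (V × V)) (v : V × V → ℝ) (P : List (V × V)) (δ : ℝ)
    (hPA : ∀ a ∈ P, a ∈ A)
    (hfst : (P.map Prod.fst).Nodup) (hsnd : (P.map Prod.snd).Nodup) (i : V) :
    influx1 A (fun a => if a ∈ P then v a - δ else v a) i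
      = influx1 A v i - δ * ((if i ∈ P.map Prod.fst then (1:ℝ) else 0)
          - (if i ∈ P.map Prod.snd then (1:ℝ) else 0)) := by
  unfold influx1
  have key : ∀ (g : V → V × V),
      (∑ j ∈ univ.filter (fun j => g j ∈ A), (if g j ∈ P then v (g j) - δ else v (g j)))
        = (∑ j ∈ univ.filter (fun j => g j ∈ A), v (g j))
          - δ * ((univ.filter fun j => g j ∈ P).card : ℝ) := by
    intro g
    have h1 : ∀ j, (if g j ∈ P then v (g j) - δ else v (g j))
        = v (g j) - (if g j ∈ P then δ else 0) := by
      intro j; split_ifs <;> ring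
    simp only [h1, Finset.sum_sub_distrib]
    congr 1
    have h2 : (∑ j ∈ univ.filter (fun j => g j ∈ A), (if g j ∈ P then δ else 0))
        = ∑ j ∈ (univ : Finset V), (if g j ∈ P then δ else 0) := by
      apply Finset.sum_subset (Finset.subset_univ _)
      intro j _ hj
      simp only [mem_filter, mem_univ, true_and] at hj
      rw [if_neg (fun hP => hj (hPA _ hP))]
    rw [h2, ← Finset.sum_filter, Finset.sum_const, nsmul_eq_mul, mul_comm]
  rw [key (fun j => (i, j)), key (fun j => (j, i)),
    card_filter_fst P hfst i, card_filter_snd P hsnd i]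
  push_cast
  split_ifs <;> ring

/-- Each push either strictly reduces the number of arcs with positive flow or strictly
reduces the number of imbalanced nodes (and enlarges neither set); consequently any
sequence of consecutive pushes has length at most |A| + 2|V|. -/
theorem stmt_1 {V : Type*} [Fintype V] [DecidableEq V] (A : Finset (V × V)) :
    (∀ v v' : V × V → ℝ, (∀ a, 0 ≤ v a) → (∀ a ∉ A, v a = 0) → IsPush A v v' →
      (A.filter fun a => 0 < v' a) ⊆ (A.filter fun a => 0 < v a) ∧
      (Finset.univ.filter fun i => influx1 A v' i ≠ 0)
        ⊆ (Finset.univ.filter fun i => influx1 A v i ≠ 0) ∧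
      ((A.filter fun a => 0 < v' a).card < (A.filter fun a => 0 < v a).card ∨
        (Finset.univ.filter fun i => influx1 A v' i ≠ 0).card
          < (Finset.univ.filter fun i => influx1 A v i ≠ 0).card))
    ∧
    (∀ (n : ℕ) (vs : ℕ → V × V → ℝ),
      (∀ k, ∀ a, 0 ≤ vs k a) → (∀ k, ∀ a ∉ A, vs k a = 0) →
      (∀ k < n, IsPush A (vs k) (vs (k + 1))) →
      n ≤ A.card + 2 * Fintype.card V) := by
  have h1 : (∀ v v' : V × V → ℝ, (∀ a, 0 ≤ v a) → (∀ a ∉ A, v a = 0) → IsPush A v v' →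
      (A.filter fun a => 0 < v' a) ⊆ (A.filter fun a => 0 < v a) ∧
      (Finset.univ.filter fun i => influx1 A v' i ≠ 0)
        ⊆ (Finset.univ.filter fun i => influx1 A v i ≠ 0) ∧
      ((A.filter fun a => 0 < v' a).card < (A.filter fun a => 0 < v a).card ∨
        (Finset.univ.filter fun i => influx1 A v' i ≠ 0).card
          < (Finset.univ.filter fun i => influx1 A v i ≠ 0).card)) := by
    intro v v' hv0 hvA hpush
    obtain ⟨L, s, t, δ, hlen, hnd, hhead, hlast, hchain, hs, ht, hδ, hδs, hδt, hδmin,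
      hcase, hv'⟩ := hpush
    -- decompose L = s :: M ++ [t]
    obtain ⟨M, rfl⟩ : ∃ M, L = s :: (M ++ [t]) := by
      cases L with
      | nil => simp at hhead
      | cons a l =>
        simp only [List.head?_cons, Option.some.injEq] at hhead
        subst hhead
        cases l with
        | nil => simp at hlen
        | cons b l' =>
          refine ⟨(b :: l').dropLast, ?_⟩
          have hne : (b :: l') ≠ [] := by simp
          have hgl : (b :: l').getLast? = some t := by
            rw [← hlast, List.getLast?_cons_cons]
          have ht' : (b :: l').getLast hne = t := by
            rw [List.getLast?_eq_getLast hne] at hgl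
            exact Option.some.injEq _ _ ▸ hgl
          rw [← ht']
          rw [List.dropLast_append_getLast hne]
    set L := s :: (M ++ [t]) with hL
    set P := L.zip L.tail with hP
    have hdl : L.dropLast = s :: M := by
      rw [hL, show s :: (M ++ [t]) = (s :: M) ++ [t] from rfl, List.dropLast_concat]
    have htl : L.tail = M ++ [t] := rfl
    have hfstP : P.map Prod.fst = s :: M := by rw [hP, map_fst_zip_tail, hdl]
    have hsndP : P.map Prod.snd = M ++ [t] := by rw [hP, map_snd_zip_tail, htl]
    have hndfst : (P.map Prod.fst).Nodup := by
      rw [hP, map_fst_zip_tail]; exact (List.dropLast_sublist L).nodup hnd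
    have hndsnd : (P.map Prod.snd).Nodup := by
      rw [hP, map_snd_zip_tail]; exact (List.tail_sublist L).nodup hnd
    -- nodup facts
    have hsMt : s ∉ M ++ [t] := (List.nodup_cons.mp hnd).1
    have hsM : s ∉ M := fun h => hsMt (List.mem_append.mpr (Or.inl h))
    have hst : s ≠ t := fun h => hsMt (List.mem_append.mpr (Or.inr (by simp [h])))
    have htM : t ∉ M := by
      have h2 := (List.nodup_cons.mp hnd).2
      intro h
      exact List.disjoint_left.mp ((List.nodup_append'.mp h2).2.2) h (by simp)
    -- path arcs properties
    have hPA : ∀ a ∈ P, a ∈ A := by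
      intro a ha
      have h := chain'_zip_tail hchain a ha
      simpa using h.1
    have hvpos : ∀ a ∈ P, 0 < v a := by
      intro a ha
      have h := chain'_zip_tail hchain a ha
      simpa using h.2
    -- influx formula
    have hinflux : ∀ i, influx1 A v' i
        = influx1 A v i - δ * ((if i ∈ s :: M then (1:ℝ) else 0)
            - (if i ∈ M ++ [t] then (1:ℝ) else 0)) := by
      intro i
      rw [hv']
      have := influx_push A v P δ hPA hndfst hndsnd i
      rw [hfstP, hsndP] at this
      exact this
    have hinfs : influx1 A v' s = influx1 A v s - δ := by
      rw [hinflux s]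
      rw [if_pos (by simp), if_neg hsMt]
      ring
    have hinft : influx1 A v' t = influx1 A v t + δ := by
      rw [hinflux t]
      rw [if_neg (by simp [hst.symm, htM]), if_pos (by simp)]
      ring
    have hinfo : ∀ i, i ≠ s → i ≠ t → influx1 A v' i = influx1 A v i := by
      intro i his hit
      rw [hinflux i]
      by_cases hiM : i ∈ M
      · rw [if_pos (by simp [hiM]), if_pos (by simp [hiM])]; ring
      · rw [if_neg (by simp [his, hiM]), if_neg (by simp [hit, hiM])]; ring
    -- v' ≤ v
    have hle : ∀ a, v' a ≤ v a := by
      intro a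
      rw [hv']
      dsimp only
      split_ifs <;> linarith
    -- inclusion of positive arcs
    have hsub1 : (A.filter fun a => 0 < v' a) ⊆ (A.filter fun a => 0 < v a) := by
      intro a ha
      rw [mem_filter] at ha ⊢
      exact ⟨ha.1, lt_of_lt_of_le ha.2 (hle a)⟩
    -- inclusion of imbalanced nodes
    have hsub2 : (Finset.univ.filter fun i => influx1 A v' i ≠ 0)
        ⊆ (Finset.univ.filter fun i => influx1 A v i ≠ 0) := by
      intro i hi
      rw [mem_filter] at hi ⊢
      refine ⟨mem_univ i, ?_⟩
      by_cases his : i = s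
      · subst his; exact ne_of_gt hs
      by_cases hit : i = t
      · subst hit; exact ne_of_lt ht
      rw [← hinfo i his hit]
      exact hi.2
    refine ⟨hsub1, hsub2, ?_⟩
    rcases hcase with hc | hc | ⟨a, haP, hc⟩
    · right
      apply Finset.card_lt_card
      rw [Finset.ssubset_iff_of_subset hsub2]
      refine ⟨s, ?_, ?_⟩
      · rw [mem_filter]; exact ⟨mem_univ s, ne_of_gt hs⟩
      · rw [mem_filter]
        push_neg
        intro _
        rw [hinfs, hc]; ring
    · right
      apply Finset.card_lt_card
      rw [Finset.ssubset_iff_of_subset hsub2]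
      refine ⟨t, ?_, ?_⟩
      · rw [mem_filter]; exact ⟨mem_univ t, ne_of_lt ht⟩
      · rw [mem_filter]
        push_neg
        intro _
        rw [hinft, hc]; ring
    · left
      apply Finset.card_lt_card
      rw [Finset.ssubset_iff_of_subset hsub1]
      refine ⟨a, ?_, ?_⟩
      · rw [mem_filter]; exact ⟨hPA a haP, hvpos a haP⟩
      · rw [mem_filter]
        push_neg
        intro _
        rw [hv']
        dsimp only
        rw [if_pos haP, hc]
        linarith
  refine ⟨h1, ?_⟩
  intro n vs hvs0 hvsA hp
  set F : ℕ → ℕ := fun k => (A.filter fun a => 0 < vs k a).card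
      + (Finset.univ.filter fun i => influx1 A (vs k) i ≠ 0).card with hF
  have hdec : ∀ k < n, F (k + 1) < F k := by
    intro k hk
    obtain ⟨hsub1, hsub2, hlt⟩ := h1 (vs k) (vs (k + 1)) (hvs0 k) (hvsA k) (hp k hk)
    have c1 := Finset.card_le_card hsub1
    have c2 := Finset.card_le_card hsub2
    rcases hlt with h | h <;> simp only [hF] <;> omega
  have hdown : ∀ k ≤ n, F k + k ≤ F 0 := by
    intro k hk
    induction k with
    | zero => simp
    | succ m ih =>
      have h1' := hdec m (by omega)
      have h2' := ih (by omega)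
      omega
  have hF0 : F 0 ≤ A.card + Fintype.card V := by
    have a1 : (A.filter fun a => 0 < vs 0 a).card ≤ A.card :=
      Finset.card_le_card (Finset.filter_subset _ _)
    have a2 : (Finset.univ.filter fun i => influx1 A (vs 0) i ≠ 0).card ≤ Fintype.card V := by
      calc (Finset.univ.filter fun i => influx1 A (vs 0) i ≠ 0).card
          ≤ (Finset.univ : Finset V).card := Finset.card_le_card (Finset.filter_subset _ _)
        _ = Fintype.card V := Finset.card_univ
    simp only [hF]
    omega
  have := hdown n le_rfl
  omega
end
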